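/- Let (p, Q) be one of (269, 268), (401, 400), (419, 418), (499, 166), (587, 293). Then for every integer n ≥ 1: if n ≡ c (mod Q) for some c ∈ {0, −1, −4, −17}, then ν_p(T(n)) = ν_p(n − c) + 1; if 3n ≡ 1 (mod Q), then ν_p(T(n)) = ν_p(3n − 1) + 1; if 3n ≡ −5 (mod Q), then ν_p(T(n)) = ν_p(3n + 5) + 1; and in all remaining cases ν_p(T(n)) = 0. (The six residue classes involved are pairwise distinct modulo Q; since gcd(3, Q) = 1, the congruences 3n ≡ 1 and 3n ≡ −5 (mod Q) express n ≡ 1/3 and n ≡ −5/3 (mod Q), and since p ≠ 3 one has ν_p(n − 1/3) = ν_p(3n − 1) and ν_p(n + 5/3) = ν_p(3n + 5).) -/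

import Mathlib

/-!
In `ℤ[α]`, `α³ = α² + α + 1`, the Tribonacci numbers are `T n = L (α ^ n)` for the additive
map `L (a + bα + cα²) = b + c`, and `α ^ Q ≡ 1 (mod p)` for each of the five pairs `(p, Q)`.
If `L g = 0` and `u = 1 + pν`, the binomial expansion of `u ^ m` gives
`L (g u^m) ≡ m p L(gν) (mod p ^ (ν_p(m) + 2))`, so `ν_p (L (g u^m)) = ν_p(m) + 1` whenever
`p ∤ L(gν)`. With `g = α^c`, `u = α^Q` this handles `n ≡ c (mod Q)`, since `T c = 0` for
`c = 0, -1, -4, -17`. The classes `3n ≡ 1, -5` are the "zeros" `n = 1/3, -5/3`: `β = α² - α`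
satisfies `β³ = 2α`, so `g = α^(-e) x β`, `u = (x β) ^ Q` give `L (g u^m) = (2x³)^(n+e) T(n)`
when `3(n + e) = Qm + 1`, and `2x³` is a `p`-adic unit. In every other residue class
`T n ≡ T (n mod Q)` is a unit mod `p`. The arithmetic conditions on `p` are checked by kernel
computation.
-/

theorem Nat.Prime.padicValNat_add_two_le {p : ℕ} (hp : p.Prime) (hp2 : p ≠ 2) {j : ℕ}
    (hj : 2 ≤ j) : padicValNat p j + 2 ≤ j := by
  have := Fact.mk hp
  set v := padicValNat p j
  rcases Nat.eq_zero_or_pos v with hv | hv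
  · omega
  obtain ⟨w, hw⟩ : ∃ w, v = w + 1 := ⟨v - 1, by omega⟩
  have h3w : w < 3 ^ w := Nat.lt_pow_self (by norm_num)
  calc v + 2 ≤ 3 ^ v := by rw [hw, pow_succ]; omega
    _ ≤ p ^ v := Nat.pow_le_pow_left (hp.two_le.lt_of_ne' hp2) v
    _ ≤ j := Nat.le_of_dvd (by omega) pow_padicValNat_dvd

theorem Nat.Prime.pow_add_two_dvd_choose_mul_pow {p : ℕ} (hp : p.Prime) (hp2 : p ≠ 2)
    {m k j : ℕ} (hk : p ^ k ∣ m) (hj : 2 ≤ j) : p ^ (k + 2) ∣ m.choose j * p ^ j := by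
  have := Fact.mk hp
  rcases Nat.eq_zero_or_pos (m.choose j) with h0 | hpos
  · simp [h0]
  have hjm : j ≤ m := by by_contra h; simp [Nat.choose_eq_zero_of_lt (not_le.mp h)] at hpos
  have hid : m * (m - 1).choose (j - 1) = m.choose j * j := by
    have := Nat.add_one_mul_choose_eq (m - 1) (j - 1)
    rwa [Nat.sub_add_cancel (by omega), Nat.sub_add_cancel (by omega)] at this
  have hdvd : p ^ k ∣ m.choose j * j := hid ▸ hk.mul_right _
  have hk' : k ≤ padicValNat p (m.choose j) + padicValNat p j := by
    rw [← padicValNat.mul hpos.ne' (by omega)]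
    exact (padicValNat_dvd_iff_le (by positivity)).mp hdvd
  calc p ^ (k + 2) ∣ p ^ (padicValNat p (m.choose j) + j) :=
        pow_dvd_pow p (by linarith [hp.padicValNat_add_two_le hp2 hj])
    _ ∣ m.choose j * p ^ j := by rw [pow_add]; exact mul_dvd_mul_right pow_padicValNat_dvd _

theorem Nat.Prime.pow_add_two_dvd_one_add_mul_pow_sub {R : Type*} [CommRing R] {p : ℕ}
    (hp : p.Prime) (hp2 : p ≠ 2) {m k : ℕ} (hk : p ^ k ∣ m) (x : R) :
    (p : R) ^ (k + 2) ∣ (1 + p * x) ^ m - (1 + m * (p * x)) := by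
  rcases m with _ | m
  · simp
  have hterm : ∀ j ∈ Finset.range m,
      (p : R) ^ (k + 2) ∣
        (p * x) ^ (j + 2) * 1 ^ (m + 1 - (j + 2)) * ((m + 1).choose (j + 2) : ℕ) := by
    intro j _
    obtain ⟨c, hc⟩ := hp.pow_add_two_dvd_choose_mul_pow hp2 hk (j := j + 2) (by omega)
    have hcast : (p * x) ^ (j + 2) * 1 ^ (m + 1 - (j + 2)) * ((m + 1).choose (j + 2) : R) =
        (((m + 1).choose (j + 2) * p ^ (j + 2) : ℕ) : R) * x ^ (j + 2) := by
      push_cast; ring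
    rw [hcast, hc, Nat.cast_mul, Nat.cast_pow, mul_assoc]
    exact dvd_mul_right _ _
  rw [add_comm 1, add_pow, Finset.sum_range_succ', Finset.sum_range_succ']
  convert Finset.dvd_sum hterm using 1
  simp only [zero_add, pow_zero, pow_one, one_pow, mul_one, Nat.choose_zero_right,
    Nat.choose_one_right]
  push_cast
  ring

theorem padicValInt_add_eq_of_pow_dvd {p : ℕ} [Fact p.Prime] {a b : ℤ} (ha : a ≠ 0)
    (hb : (p : ℤ) ^ (padicValInt p a + 1) ∣ b) : padicValInt p (a + b) = padicValInt p a := by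
  have hle := (padicValInt_dvd_iff _ (a + b)).mp
    (dvd_add (padicValInt_dvd a) ((pow_dvd_pow _ (Nat.le_succ _)).trans hb))
  have hlt : ¬ (p : ℤ) ^ (padicValInt p a + 1) ∣ a + b := fun h => by
    have := (padicValInt_dvd_iff _ a).mp ((dvd_add_left hb).mp h)
    omega
  rw [padicValInt_dvd_iff] at hlt
  omega

theorem padicValInt_mul_of_not_dvd {p : ℕ} [Fact p.Prime] {a b : ℤ} (ha : ¬ (p : ℤ) ∣ a)
    (hb : b ≠ 0) : padicValInt p (a * b) = padicValInt p b := by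
  rw [padicValInt.mul (by rintro rfl; exact ha (dvd_zero _)) hb,
    padicValInt.eq_zero_of_not_dvd ha, zero_add]

theorem AddMonoidHom.map_natCast_mul {R : Type*} [NonAssocSemiring R] (L : R →+ ℤ) (n : ℕ)
    (x : R) : L (n * x) = n * L x := by
  rw [← nsmul_eq_mul, map_nsmul, nsmul_eq_mul]

theorem AddMonoidHom.natCast_dvd_map {R : Type*} [Semiring R] (L : R →+ ℤ) {n : ℕ}
    {x : R} (h : (n : R) ∣ x) : (n : ℤ) ∣ L x := by
  obtain ⟨y, rfl⟩ := h
  exact ⟨L y, L.map_natCast_mul n y⟩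

theorem AddMonoidHom.map_intCast_mul {R : Type*} [NonAssocRing R] (L : R →+ ℤ) (n : ℤ)
    (x : R) : L (n * x) = n * L x := by
  rw [← zsmul_eq_mul, map_zsmul, smul_eq_mul]

theorem AddMonoidHom.padicValInt_map_mul_pow {R : Type*} [CommRing R] (L : R →+ ℤ) {p : ℕ}
    [hp : Fact p.Prime] (hp2 : p ≠ 2) {g u : R} (hg : L g = 0) (hu : (p : R) ∣ u - 1)
    (hgu : ¬ (p : ℤ) ^ 2 ∣ L (g * (u - 1))) {m : ℕ} (hm : m ≠ 0) :
    padicValInt p (L (g * u ^ m)) = padicValNat p m + 1 := by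
  obtain ⟨ν, hν⟩ := hu
  set k := padicValNat p m
  obtain ⟨E, hE⟩ :=
    hp.out.pow_add_two_dvd_one_add_mul_pow_sub hp2 (pow_padicValNat_dvd (n := m)) ν
  have hw : ¬ (p : ℤ) ∣ L (g * ν) := fun ⟨w, hw⟩ => hgu ⟨w, by
    rw [hν, mul_left_comm, L.map_natCast_mul, hw]; ring⟩
  have hexp : L (g * u ^ m) = (m * p : ℕ) * L (g * ν) + (p ^ (k + 2) : ℕ) * L (g * E) := by
    have hexpand :
        g * u ^ m = g + ((m * p : ℕ) : R) * (g * ν) + ((p ^ (k + 2) : ℕ) : R) * (g * E) := by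
      rw [show u = 1 + p * ν by rw [← hν]; ring, eq_add_of_sub_eq' hE]
      push_cast
      ring
    rw [hexpand, map_add, map_add, hg, L.map_natCast_mul, L.map_natCast_mul, zero_add]
  push_cast at hexp
  have hw0 : L (g * ν) ≠ 0 := fun h => hw (h ▸ dvd_zero _)
  have hmp : (m : ℤ) * p ≠ 0 := by have := hp.out.pos; positivity
  have hm0 : (m : ℤ) * p * L (g * ν) ≠ 0 := mul_ne_zero hmp hw0
  have hval : padicValInt p (m * p * L (g * ν)) = k + 1 := by
    rw [padicValInt.mul hmp hw0, padicValInt_mul_eq_succ _ (by exact_mod_cast hm),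
      padicValInt.of_nat, padicValInt.eq_zero_of_not_dvd hw]
  rw [hexp, padicValInt_add_eq_of_pow_dvd hm0 (hval ▸ dvd_mul_right _ _), hval]

theorem eq_of_tribonacci_recurrence {M : Type*} [AddCommGroup M] {f g : ℤ → M}
    (hf : ∀ n, f (n + 3) = f (n + 2) + f (n + 1) + f n)
    (hg : ∀ n, g (n + 3) = g (n + 2) + g (n + 1) + g n)
    (h0 : f 0 = g 0) (h1 : f 1 = g 1) (h2 : f 2 = g 2) : f = g := by
  have key (n : ℤ) : f n = g n ∧ f (n + 1) = g (n + 1) ∧ f (n + 2) = g (n + 2) := by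
    induction n using Int.induction_on with
    | zero => simpa using ⟨h0, h1, h2⟩
    | succ i ih =>
      obtain ⟨e0, e1, e2⟩ := ih
      rw [add_assoc, add_assoc, show (1 : ℤ) + 1 = 2 by norm_num,
        show (1 : ℤ) + 2 = 3 by norm_num, hf, hg, e0, e1, e2]
      exact ⟨rfl, rfl, rfl⟩
    | pred i ih =>
      obtain ⟨e0, e1, e2⟩ := ih
      have hf' := hf (-i - 1)
      have hg' := hg (-i - 1)
      simp only [show -(i : ℤ) - 1 + 3 = -i + 2 by ring, show -(i : ℤ) - 1 + 2 = -i + 1 by ring,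
        show -(i : ℤ) - 1 + 1 = -i by ring] at hf' hg' ⊢
      refine ⟨?_, e0, e1⟩
      rw [← add_left_cancel_iff (a := f (-i + 1) + f (-i)), ← hf', e0, e1, e2, hg']
  exact funext fun n => (key n).1

/-- `⟨a, b, c⟩` is `a + bα + cα²`; products are reduced with `α³ = α² + α + 1`. -/
@[ext] structure TribRing where
  a : ℤ
  b : ℤ
  c : ℤ
deriving DecidableEq

namespace TribRing

instance : Zero TribRing := ⟨⟨0, 0, 0⟩⟩
instance : One TribRing := ⟨⟨1, 0, 0⟩⟩
instance : NatCast TribRing := ⟨fun n => ⟨n, 0, 0⟩⟩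
instance : IntCast TribRing := ⟨fun n => ⟨n, 0, 0⟩⟩
instance : Add TribRing := ⟨fun x y => ⟨x.a + y.a, x.b + y.b, x.c + y.c⟩⟩
instance : Neg TribRing := ⟨fun x => ⟨-x.a, -x.b, -x.c⟩⟩
instance : Mul TribRing := ⟨fun x y =>
  ⟨x.a * y.a + x.b * y.c + x.c * y.b + x.c * y.c,
   x.a * y.b + x.b * y.a + x.b * y.c + x.c * y.b + 2 * (x.c * y.c),
   x.a * y.c + x.b * y.b + x.c * y.a + x.b * y.c + x.c * y.b + 2 * (x.c * y.c)⟩⟩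

@[simp] theorem zero_a : (0 : TribRing).a = 0 := rfl
@[simp] theorem zero_b : (0 : TribRing).b = 0 := rfl
@[simp] theorem zero_c : (0 : TribRing).c = 0 := rfl
@[simp] theorem one_a : (1 : TribRing).a = 1 := rfl
@[simp] theorem one_b : (1 : TribRing).b = 0 := rfl
@[simp] theorem one_c : (1 : TribRing).c = 0 := rfl
@[simp] theorem natCast_a (n : ℕ) : (n : TribRing).a = n := rfl
@[simp] theorem natCast_b (n : ℕ) : (n : TribRing).b = 0 := rfl
@[simp] theorem natCast_c (n : ℕ) : (n : TribRing).c = 0 := rfl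
@[simp] theorem intCast_a (n : ℤ) : (n : TribRing).a = n := rfl
@[simp] theorem intCast_b (n : ℤ) : (n : TribRing).b = 0 := rfl
@[simp] theorem intCast_c (n : ℤ) : (n : TribRing).c = 0 := rfl
@[simp] theorem add_a (x y : TribRing) : (x + y).a = x.a + y.a := rfl
@[simp] theorem add_b (x y : TribRing) : (x + y).b = x.b + y.b := rfl
@[simp] theorem add_c (x y : TribRing) : (x + y).c = x.c + y.c := rfl
@[simp] theorem neg_a (x : TribRing) : (-x).a = -x.a := rfl
@[simp] theorem neg_b (x : TribRing) : (-x).b = -x.b := rfl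
@[simp] theorem neg_c (x : TribRing) : (-x).c = -x.c := rfl
@[simp] theorem mul_a (x y : TribRing) :
    (x * y).a = x.a * y.a + x.b * y.c + x.c * y.b + x.c * y.c := rfl
@[simp] theorem mul_b (x y : TribRing) :
    (x * y).b = x.a * y.b + x.b * y.a + x.b * y.c + x.c * y.b + 2 * (x.c * y.c) := rfl
@[simp] theorem mul_c (x y : TribRing) :
    (x * y).c = x.a * y.c + x.b * y.b + x.c * y.a + x.b * y.c + x.c * y.b + 2 * (x.c * y.c) := rfl

instance : CommRing TribRing where
  add_assoc _ _ _ := by ext <;> simp only [add_a, add_b, add_c] <;> ring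
  zero_add _ := by ext <;> simp
  add_zero _ := by ext <;> simp
  add_comm _ _ := by ext <;> simp only [add_a, add_b, add_c] <;> ring
  mul_assoc _ _ _ := by ext <;> simp only [mul_a, mul_b, mul_c] <;> ring
  one_mul _ := by ext <;> simp
  mul_one _ := by ext <;> simp
  left_distrib _ _ _ := by
    ext <;> simp only [mul_a, mul_b, mul_c, add_a, add_b, add_c] <;> ring
  right_distrib _ _ _ := by
    ext <;> simp only [mul_a, mul_b, mul_c, add_a, add_b, add_c] <;> ring
  mul_comm _ _ := by ext <;> simp only [mul_a, mul_b, mul_c] <;> ring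
  zero_mul _ := by ext <;> simp
  mul_zero _ := by ext <;> simp
  neg_add_cancel _ := by ext <;> simp
  nsmul := nsmulRec
  zsmul := zsmulRec
  natCast_zero := by ext <;> simp
  natCast_succ _ := by ext <;> simp
  intCast_ofNat _ := by ext <;> simp
  intCast_negSucc _ := by ext <;> simp [Int.negSucc_eq]

theorem natCast_dvd_iff (n : ℕ) (x : TribRing) :
    (n : TribRing) ∣ x ↔ (n : ℤ) ∣ x.a ∧ (n : ℤ) ∣ x.b ∧ (n : ℤ) ∣ x.c := by
  constructor
  · rintro ⟨y, rfl⟩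
    simp
  · rintro ⟨⟨a, ha⟩, ⟨b, hb⟩, ⟨c, hc⟩⟩
    exact ⟨⟨a, b, c⟩, by ext <;> simp [ha, hb, hc]⟩

instance (n : ℕ) (x : TribRing) : Decidable ((n : TribRing) ∣ x) :=
  decidable_of_iff' _ (natCast_dvd_iff n x)

def α : TribRingˣ where
  val := ⟨0, 1, 0⟩
  inv := ⟨-1, -1, 1⟩
  val_inv := by decide
  inv_val := by decide

theorem alpha_cube : (α : TribRing) ^ 3 = α ^ 2 + α + 1 := by decide

def L : TribRing →+ ℤ where
  toFun x := x.b + x.c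
  map_zero' := rfl
  map_add' x y := by simp only [add_b, add_c]; ring

def trib (n : ℤ) : ℤ := L ↑(α ^ n)

theorem trib_add_natCast (n : ℤ) (k : ℕ) :
    trib (n + k) = L (↑(α ^ n) * (α : TribRing) ^ k) := by
  rw [trib, zpow_add, Units.val_mul, zpow_natCast, Units.val_pow_eq_pow_val]

theorem trib_add_three (n : ℤ) : trib (n + 3) = trib (n + 2) + trib (n + 1) + trib n := by
  have h3 := trib_add_natCast n 3
  have h2 := trib_add_natCast n 2
  have h1 := trib_add_natCast n 1
  push_cast at h3 h2 h1
  rw [h3, h2, h1, alpha_cube, pow_one, mul_add, mul_add, mul_one, map_add, map_add, trib]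

theorem eq_trib {T : ℤ → ℤ} (hT0 : T 0 = 0) (hT1 : T 1 = 1) (hT2 : T 2 = 1)
    (hTrec : ∀ n, T (n + 3) = T (n + 2) + T (n + 1) + T n) : T = trib :=
  eq_of_tribonacci_recurrence hTrec trib_add_three
    (by rw [hT0]; decide +kernel) (by rw [hT1]; decide +kernel) (by rw [hT2]; decide +kernel)

theorem trib_eq_zero {c : ℤ} (hc : c ∈ ({0, -1, -4, -17} : Set ℤ)) : trib c = 0 := by
  rcases hc with rfl | rfl | rfl | rfl <;> decide +kernel

theorem trib_modEq_trib_emod {p Q : ℕ} (hQ : (p : TribRing) ∣ α ^ Q - 1) {n : ℤ} (hn : 0 ≤ n) :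
    trib n ≡ trib (n % Q) [ZMOD p] := by
  obtain ⟨q, hq⟩ : ∃ q : ℕ, n = n % Q + (Q * q : ℕ) :=
    ⟨(n / Q).toNat, by
      rw [Nat.cast_mul, Int.toNat_of_nonneg (Int.ediv_nonneg hn (by positivity)),
        Int.emod_add_mul_ediv]⟩
  have hdvd : (p : TribRing) ∣ ((α : TribRing) ^ Q) ^ q - 1 := by
    simpa using hQ.trans (sub_dvd_pow_sub_pow _ 1 q)
  refine (Int.modEq_iff_dvd.mpr ?_).symm
  have h : trib n - trib (n % Q) =
      L (↑(α ^ (n % Q)) * (((α : TribRing) ^ Q) ^ q - 1)) := by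
    rw [mul_sub, mul_one, map_sub, ← pow_mul, ← trib_add_natCast, ← hq]
    rfl
  rw [h]
  exact L.natCast_dvd_map (dvd_mul_of_dvd_right hdvd _)

theorem padicValInt_trib_of_dvd_sub {p Q : ℕ} [Fact p.Prime] (hp2 : p ≠ 2) (hpQ : ¬ p ∣ Q)
    (hQ : (p : TribRing) ∣ α ^ Q - 1) {c : ℤ} (hc : trib c = 0)
    (hcert : ¬ (p : ℤ) ^ 2 ∣ L (↑(α ^ c) * ((α : TribRing) ^ Q - 1))) {n : ℤ} (hn : 0 < n - c)
    (hdvd : (Q : ℤ) ∣ n - c) :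
    padicValInt p (trib n) = padicValInt p (n - c) + 1 := by
  obtain ⟨m, hm⟩ := hdvd
  lift m to ℕ using by nlinarith
  have hm0 : m ≠ 0 := by rintro rfl; simp at hm; omega
  rw [show n = c + (Q * m : ℕ) by push_cast; linarith, trib_add_natCast, pow_mul,
    L.padicValInt_map_mul_pow hp2 hc hQ hcert hm0, add_sub_cancel_left,
    padicValInt.of_nat, padicValNat.mul (by rintro rfl; exact hpQ (dvd_zero p)) hm0,
    padicValNat.eq_zero_of_not_dvd hpQ, zero_add]

def β : TribRing := α ^ 2 - α

theorem beta_cube : β ^ 3 = 2 * α := by decide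

theorem padicValInt_trib_of_dvd_three_mul_sub_one {p Q : ℕ} [hp : Fact p.Prime] (hp2 : p ≠ 2)
    (hpQ : ¬ p ∣ Q) {x : ℤ} (hx : ¬ (p : ℤ) ∣ x) (hX : (p : TribRing) ∣ (x * β) ^ Q - 1)
    {e : ℕ} (he : L (↑(α ^ (-e : ℤ)) * β) = 0)
    (hcert : ¬ (p : ℤ) ^ 2 ∣ L (↑(α ^ (-e : ℤ)) * (x * β) * ((x * β) ^ Q - 1))) {n : ℤ}
    (hn : 0 < n + e) (hdvd : (Q : ℤ) ∣ 3 * (n + e) - 1) :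
    padicValInt p (trib n) = padicValInt p (3 * (n + e) - 1) + 1 := by
  lift n + e to ℕ using hn.le with k hk
  obtain ⟨m, hm⟩ := hdvd
  lift m to ℕ using by nlinarith
  have hm0 : m ≠ 0 := by rintro rfl; omega
  have h3k : 3 * k = Q * m + 1 := by omega
  have hg : L (↑(α ^ (-e : ℤ)) * (x * β)) = 0 := by
    rw [mul_left_comm, L.map_intCast_mul, he, mul_zero]
  have hkey : (((2 * x ^ 3) ^ k : ℤ) : TribRing) * ↑(α ^ n) =
      ↑(α ^ (-e : ℤ)) * (x * β) * ((x * β) ^ Q) ^ m := by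
    have hXpow :
        (x * β) * ((x * β) ^ Q) ^ m = ((2 * x ^ 3 : ℤ) : TribRing) ^ k * (α : TribRing) ^ k := by
      rw [← pow_mul, ← pow_succ', ← h3k, pow_mul, mul_pow, beta_cube, ← mul_pow]
      push_cast
      ring
    rw [mul_assoc, hXpow, show n = -e + k by omega, zpow_add, zpow_natCast, Units.val_mul,
      Units.val_pow_eq_pow_val]
    push_cast
    ring
  have hval := L.padicValInt_map_mul_pow hp2 hg hX hcert hm0
  rw [← hkey, L.map_intCast_mul] at hval
  change padicValInt p ((2 * x ^ 3) ^ k * trib n) = _ at hval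
  have hpZ := Nat.prime_iff_prime_int.mp hp.out
  have hpow : ¬ (p : ℤ) ∣ (2 * x ^ 3) ^ k := fun h => by
    rcases hpZ.dvd_or_dvd (hpZ.dvd_of_dvd_pow h) with h2 | h3
    · exact hp2 ((Nat.prime_dvd_prime_iff_eq hp.out Nat.prime_two).mp (by exact_mod_cast h2))
    · exact hx (hpZ.dvd_of_dvd_pow h3)
  have htrib : trib n ≠ 0 := by
    rintro h
    rw [h, mul_zero, padicValInt.zero] at hval
    omega
  rw [padicValInt_mul_of_not_dvd hpow htrib] at hval
  rw [hval, hm, padicValInt_mul_of_not_dvd (by exact_mod_cast hpQ) (by exact_mod_cast hm0),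
    padicValInt.of_nat]

theorem padicValInt_trib_eq_zero_of_residues {p Q : ℕ} (hQ : (p : TribRing) ∣ α ^ Q - 1)
    (hQ0 : Q ≠ 0) {S : ℤ → Prop} (hS : ∀ a b, (Q : ℤ) ∣ a - b → S b → S a)
    (hres : ∀ r : ℕ, r < Q → (p : ℤ) ∣ trib r → S r) {n : ℤ} (hn : 0 ≤ n) (hnS : ¬ S n) :
    padicValInt p (trib n) = 0 := by
  have hQ' : (0 : ℤ) < Q := by omega
  obtain ⟨r, hr⟩ : ∃ r : ℕ, n % Q = r :=
    ⟨(n % Q).toNat, (Int.toNat_of_nonneg (Int.emod_nonneg n hQ'.ne')).symm⟩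
  have hrQ : r < Q := by have := Int.emod_lt_of_pos n hQ'; omega
  have hmod := trib_modEq_trib_emod hQ hn
  rw [hr] at hmod
  refine padicValInt.eq_zero_of_not_dvd fun hpn => hnS ?_
  exact hS n r (hr ▸ (Int.mod_modEq n Q).dvd) (hres r hrQ ((hmod.dvd_iff).mp hpn))

theorem L_alpha_zpow_neg_mul_beta :
    ∀ e ∈ ({0, 2} : Finset ℕ), L (↑(α ^ (-e : ℤ)) * β) = 0 := by
  decide +kernel

structure Certificate (p Q : ℕ) (x : ℤ) : Prop where
  prime : p.Prime
  ne_two : p ≠ 2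
  not_dvd : ¬ p ∣ Q
  alpha_pow : (p : TribRing) ∣ α ^ Q - 1
  sq_not_dvd_alpha : ∀ c ∈ ({0, -1, -4, -17} : Finset ℤ),
    ¬ (p : ℤ) ^ 2 ∣ L (↑(α ^ c) * ((α : TribRing) ^ Q - 1))
  not_dvd_x : ¬ (p : ℤ) ∣ x
  cbrt_pow : (p : TribRing) ∣ (x * β) ^ Q - 1
  sq_not_dvd_cbrt : ∀ e ∈ ({0, 2} : Finset ℕ),
    ¬ (p : ℤ) ^ 2 ∣ L (↑(α ^ (-e : ℤ)) * (x * β) * ((x * β) ^ Q - 1))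
  residues : ∀ r : ℕ, r < Q → (p : ℤ) ∣ trib r →
    (∃ c ∈ ({0, -1, -4, -17} : Finset ℤ), (Q : ℤ) ∣ r - c) ∨ (Q : ℤ) ∣ 3 * r - 1 ∨
      (Q : ℤ) ∣ 3 * r + 5

theorem Certificate.padicValInt_trib {p Q : ℕ} {x : ℤ} (h : Certificate p Q x) (n : ℤ)
    (hn : 1 ≤ n) :
    (∀ c : ℤ, c ∈ ({0, -1, -4, -17} : Set ℤ) → (Q : ℤ) ∣ (n - c) →
      padicValInt p (trib n) = padicValInt p (n - c) + 1) ∧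
    ((Q : ℤ) ∣ (3 * n - 1) → padicValInt p (trib n) = padicValInt p (3 * n - 1) + 1) ∧
    ((Q : ℤ) ∣ (3 * n + 5) → padicValInt p (trib n) = padicValInt p (3 * n + 5) + 1) ∧
    ((∀ c : ℤ, c ∈ ({0, -1, -4, -17} : Set ℤ) → ¬ (Q : ℤ) ∣ (n - c)) →
      ¬ (Q : ℤ) ∣ (3 * n - 1) → ¬ (Q : ℤ) ∣ (3 * n + 5) → padicValInt p (trib n) = 0) := by
  have := Fact.mk h.prime
  have hB (e : ℕ) (he : e ∈ ({0, 2} : Finset ℕ)) (hdvd : (Q : ℤ) ∣ 3 * (n + e) - 1) :=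
    padicValInt_trib_of_dvd_three_mul_sub_one h.ne_two h.not_dvd h.not_dvd_x h.cbrt_pow
      (L_alpha_zpow_neg_mul_beta e he) (h.sq_not_dvd_cbrt e he) (by omega) hdvd
  refine ⟨fun c hc hdvd => ?_, fun hdvd => ?_, fun hdvd => ?_, fun hc h1 h5 => ?_⟩
  · have hc' : c ∈ ({0, -1, -4, -17} : Finset ℤ) := by simpa using hc
    have : c ≤ 0 := by simp at hc; omega
    exact padicValInt_trib_of_dvd_sub h.ne_two h.not_dvd h.alpha_pow (trib_eq_zero hc)
      (h.sq_not_dvd_alpha c hc') (by omega) hdvd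
  · simpa using hB 0 (by simp) (by simpa using hdvd)
  · have h35 : 3 * (n + (2 : ℕ)) - 1 = 3 * n + 5 := by push_cast; ring
    rw [← h35] at hdvd ⊢
    exact hB 2 (by simp) hdvd
  · refine padicValInt_trib_eq_zero_of_residues h.alpha_pow
      (by rintro rfl; exact h.not_dvd (dvd_zero p))
      (S := fun t => (∃ c ∈ ({0, -1, -4, -17} : Finset ℤ), (Q : ℤ) ∣ t - c) ∨
        (Q : ℤ) ∣ 3 * t - 1 ∨ (Q : ℤ) ∣ 3 * t + 5) ?_ h.residues (by omega) ?_
    · rintro a b hab (⟨c, hc, hbc⟩ | hb | hb)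
      · exact Or.inl ⟨c, hc, by simpa using dvd_add hab hbc⟩
      · have := dvd_add (hab.mul_left 3) hb
        rw [show 3 * (a - b) + (3 * b - 1) = 3 * a - 1 by ring] at this
        exact Or.inr (Or.inl this)
      · have := dvd_add (hab.mul_left 3) hb
        rw [show 3 * (a - b) + (3 * b + 5) = 3 * a + 5 by ring] at this
        exact Or.inr (Or.inr this)
    · rintro (⟨c, hc', hnc⟩ | hn1 | hn5)
      exacts [hc c (by simpa using hc') hnc, h1 hn1, h5 hn5]

end TribRing

/-- For `(p, Q) ∈ {(269,268), (401,400), (419,418), (499,166), (587,293)}` and every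
integer `n ≥ 1`: if `n ≡ c (mod Q)` for `c ∈ {0, −1, −4, −17}` then
`ν_p(T(n)) = ν_p(n − c) + 1`; if `3n ≡ 1 (mod Q)` then `ν_p(T(n)) = ν_p(3n − 1) + 1`;
if `3n ≡ −5 (mod Q)` then `ν_p(T(n)) = ν_p(3n + 5) + 1`; otherwise `ν_p(T(n)) = 0`. -/
theorem marquesLengyelRat_holds_five_primes
    (T : ℤ → ℤ)
    (hT0 : T 0 = 0) (hT1 : T 1 = 1) (hT2 : T 2 = 1)
    (hTrec : ∀ n : ℤ, T (n + 3) = T (n + 2) + T (n + 1) + T n)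
    (p Q : ℕ)
    (hpQ : (p = 269 ∧ Q = 268) ∨ (p = 401 ∧ Q = 400) ∨ (p = 419 ∧ Q = 418) ∨
           (p = 499 ∧ Q = 166) ∨ (p = 587 ∧ Q = 293)) :
    ∀ n : ℤ, 1 ≤ n →
      (∀ c : ℤ, c ∈ ({0, -1, -4, -17} : Set ℤ) → (Q : ℤ) ∣ (n - c) →
        padicValInt p (T n) = padicValInt p (n - c) + 1) ∧
      ((Q : ℤ) ∣ (3 * n - 1) →
        padicValInt p (T n) = padicValInt p (3 * n - 1) + 1) ∧
      ((Q : ℤ) ∣ (3 * n + 5) →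
        padicValInt p (T n) = padicValInt p (3 * n + 5) + 1) ∧
      ((∀ c : ℤ, c ∈ ({0, -1, -4, -17} : Set ℤ) → ¬ (Q : ℤ) ∣ (n - c)) →
        ¬ (Q : ℤ) ∣ (3 * n - 1) → ¬ (Q : ℤ) ∣ (3 * n + 5) →
        padicValInt p (T n) = 0) := by
  obtain rfl := TribRing.eq_trib hT0 hT1 hT2 hTrec
  obtain ⟨x, hx⟩ : ∃ x, TribRing.Certificate p Q x := by
    -- each `x` is a cube root of `1 / 2` modulo `p ^ 2`
    rcases hpQ with ⟨rfl, rfl⟩ | ⟨rfl, rfl⟩ | ⟨rfl, rfl⟩ | ⟨rfl, rfl⟩ | ⟨rfl, rfl⟩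
    exacts [⟨57816, by constructor <;> decide +kernel⟩, ⟨123800, by constructor <;> decide +kernel⟩,
      ⟨104659, by constructor <;> decide +kernel⟩, ⟨66417, by constructor <;> decide +kernel⟩,
      ⟨260491, by constructor <;> decide +kernel⟩]
  exact hx.padicValInt_trib
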